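/- Let a, b ≥ 0 and let ν be a (positive) measure on (0,∞) satisfying ∫_{(0,1]} r dν(r) < ∞ and ν((1,∞)) < ∞. Define F : ℝ → ℂ by F(ω) = a − i b ω + ∫_{(0,∞)} (1 − e^{i r ω}) dν(r). Then there exist real constants K, L ≥ 0 such that for all ω ∈ ℝ, √(|ω| · |F(ω)|) ≤ K + L |ω|. In particular, if κ(−iω) is any complex number with |κ(−iω)|² = |ω| · |F(ω)|, then both |Re κ(−iω)| and |Im κ(−iω)| are bounded by K + L |ω|. -/

import Mathlib

/-! Since `‖1 - e^{irω}‖ ≤ min (r|ω|) 2`, splitting the Lévy integral at `r = 1` gives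
`‖F ω‖ ≤ C + D|ω|` with `C = |a| + 2ν((1,∞))` and `D = |b| + ∫_{(0,1]} r dν`. Hence
`|ω|‖F ω‖ ≤ C|ω| + D|ω|² ≤ (√C + (√C + √D)|ω|)²`, and a number `κ` with
`‖κ‖² = |ω|‖F ω‖` has both parts bounded by `‖κ‖`. -/

open MeasureTheory Set

namespace Complex

lemma enorm_one_sub_exp_I_mul_le (r ω : ℝ) : ‖1 - exp (I * r * ω)‖ₑ ≤ ‖r‖ₑ * ‖ω‖ₑ := by
  rw [enorm_sub_rev, ← enorm_mul, mul_assoc, ← ofReal_mul]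
  exact Real.enorm_exp_I_mul_ofReal_sub_one_le

lemma enorm_one_sub_exp_I_mul_le_two (r ω : ℝ) : ‖1 - exp (I * r * ω)‖ₑ ≤ 2 :=
  calc ‖1 - exp (I * r * ω)‖ₑ ≤ ‖(1 : ℂ)‖ₑ + ‖exp (I * r * ω)‖ₑ := enorm_sub_le
    _ = 2 := by
      rw [mul_assoc, ← ofReal_mul, enorm_exp_I_mul_ofReal]
      norm_num [one_add_one_eq_two]

lemma setLIntegral_enorm_one_sub_exp_I_mul_le (ν : Measure ℝ) (ω : ℝ) :
    ∫⁻ r in Ioi 0, ‖1 - exp (I * r * ω)‖ₑ ∂ν ≤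
      (∫⁻ r in Ioc 0 1, ENNReal.ofReal r ∂ν) * ‖ω‖ₑ + 2 * ν (Ioi 1) := by
  rw [← Ioc_union_Ioi_eq_Ioi zero_le_one,
    lintegral_union measurableSet_Ioi (Ioc_disjoint_Ioi le_rfl),
    ← lintegral_mul_const' _ _ enorm_ne_top]
  refine add_le_add (setLIntegral_mono' measurableSet_Ioc fun r hr => ?_) ?_
  · rw [← Real.enorm_of_nonneg hr.1.le]
    exact enorm_one_sub_exp_I_mul_le r ω
  · calc ∫⁻ r in Ioi 1, ‖1 - exp (I * r * ω)‖ₑ ∂ν ≤ ∫⁻ _ in Ioi 1, 2 ∂ν :=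
          setLIntegral_mono' measurableSet_Ioi fun r _ => enorm_one_sub_exp_I_mul_le_two r ω
      _ = 2 * ν (Ioi 1) := by rw [setLIntegral_const, mul_comm]

lemma norm_setIntegral_one_sub_exp_I_mul_le (ν : Measure ℝ)
    (h1 : ∫⁻ r in Ioc (0 : ℝ) 1, ENNReal.ofReal r ∂ν ≠ ⊤) (h2 : ν (Ioi (1 : ℝ)) ≠ ⊤) (ω : ℝ) :
    ‖∫ r in Ioi 0, (1 - exp (I * r * ω)) ∂ν‖ ≤
      (∫⁻ r in Ioc 0 1, ENNReal.ofReal r ∂ν).toReal * |ω| + 2 * (ν (Ioi 1)).toReal := by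
  rw [← toReal_enorm]
  calc _ ≤ ((∫⁻ r in Ioc 0 1, ENNReal.ofReal r ∂ν) * ‖ω‖ₑ + 2 * ν (Ioi 1)).toReal :=
        ENNReal.toReal_mono (by finiteness) ((enorm_integral_le_lintegral_enorm _).trans
          (setLIntegral_enorm_one_sub_exp_I_mul_le ν ω))
    _ = _ := by
      rw [ENNReal.toReal_add (by finiteness) (by finiteness)]
      simp [ENNReal.toReal_mul]

end Complex

lemma Real.sqrt_mul_le_of_le_affine {C D t y : ℝ} (hC : 0 ≤ C) (hD : 0 ≤ D) (ht : 0 ≤ t)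
    (hy : y ≤ C + D * t) : √(t * y) ≤ √C + (√C + √D) * t := by
  rw [Real.sqrt_le_left (by positivity)]
  obtain ⟨c, hc, rfl⟩ : ∃ c, 0 ≤ c ∧ C = c ^ 2 := ⟨√C, sqrt_nonneg C, (sq_sqrt hC).symm⟩
  obtain ⟨d, hd, rfl⟩ : ∃ d, 0 ≤ d ∧ D = d ^ 2 := ⟨√D, sqrt_nonneg D, (sq_sqrt hD).symm⟩
  rw [sqrt_sq hc, sqrt_sq hd]
  have hcd := mul_nonneg hc hd
  calc t * y ≤ t * (c ^ 2 + d ^ 2 * t) := mul_le_mul_of_nonneg_left hy ht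
    _ ≤ _ := by
      nlinarith [mul_nonneg hcd ht, mul_nonneg (mul_nonneg hcd ht) ht,
        mul_nonneg (mul_nonneg hc hc) ht, mul_nonneg (mul_nonneg (mul_nonneg hc hc) ht) ht]

lemma exists_sqrt_mul_norm_le_affine {F : ℝ → ℂ} {C D : ℝ} (hC : 0 ≤ C) (hD : 0 ≤ D)
    (hF : ∀ ω, ‖F ω‖ ≤ C + D * |ω|) :
    ∃ K L : ℝ, 0 ≤ K ∧ 0 ≤ L ∧ ∀ ω : ℝ,
      √(|ω| * ‖F ω‖) ≤ K + L * |ω| ∧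
      ∀ κ : ℂ, ‖κ‖ ^ 2 = |ω| * ‖F ω‖ →
        |κ.re| ≤ K + L * |ω| ∧ |κ.im| ≤ K + L * |ω| := by
  refine ⟨√C, √C + √D, Real.sqrt_nonneg C, by positivity, fun ω => ?_⟩
  have hsqrt := Real.sqrt_mul_le_of_le_affine hC hD (abs_nonneg ω) (hF ω)
  refine ⟨hsqrt, fun κ hκ => ?_⟩
  have hnorm : ‖κ‖ ≤ √C + (√C + √D) * |ω| := by
    rwa [← Real.sqrt_sq (norm_nonneg κ), hκ]
  exact ⟨(κ.abs_re_le_norm).trans hnorm, (κ.abs_im_le_norm).trans hnorm⟩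

theorem attenuation_affine_bound_general (a b : ℝ)
    (ν : Measure ℝ)
    (h1 : ∫⁻ r in Set.Ioc (0 : ℝ) 1, ENNReal.ofReal r ∂ν ≠ ⊤)
    (h2 : ν (Set.Ioi (1 : ℝ)) ≠ ⊤)
    (F : ℝ → ℂ)
    (hF : ∀ ω : ℝ, F ω = (a : ℂ) - Complex.I * (b : ℂ) * (ω : ℂ) +
      ∫ r in Set.Ioi (0 : ℝ), (1 - Complex.exp (Complex.I * (r : ℂ) * (ω : ℂ))) ∂ν) :
    ∃ K L : ℝ, 0 ≤ K ∧ 0 ≤ L ∧ ∀ ω : ℝ,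
      Real.sqrt (|ω| * ‖F ω‖) ≤ K + L * |ω| ∧
      ∀ κ : ℂ, ‖κ‖ ^ 2 = |ω| * ‖F ω‖ →
        |κ.re| ≤ K + L * |ω| ∧ |κ.im| ≤ K + L * |ω| := by
  set M := (∫⁻ r in Ioc (0 : ℝ) 1, ENNReal.ofReal r ∂ν).toReal
  set N := (ν (Ioi (1 : ℝ))).toReal
  refine exists_sqrt_mul_norm_le_affine (C := |a| + 2 * N) (D := |b| + M)
    (by positivity) (by positivity) fun ω => ?_
  have hLevy := Complex.norm_setIntegral_one_sub_exp_I_mul_le ν h1 h2 ω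
  calc ‖F ω‖ ≤ ‖(a : ℂ)‖ + ‖Complex.I * b * ω‖ +
        ‖∫ r in Ioi 0, (1 - Complex.exp (Complex.I * r * ω)) ∂ν‖ := by
        rw [hF ω]; exact (norm_add_le _ _).trans (add_le_add_left (norm_sub_le _ _) _)
    _ ≤ |a| + |b| * |ω| + (M * |ω| + 2 * N) := by simpa using hLevy
    _ = |a| + 2 * N + (|b| + M) * |ω| := by ring

/-- Main theorem: for `a, b ≥ 0` and a positive measure `ν` on `(0,∞)` with
`∫_{(0,1]} r dν < ∞` and `ν((1,∞)) < ∞`, the function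
`F(ω) = a - i b ω + ∫_{(0,∞)} (1 - e^{i r ω}) dν(r)` satisfies
`√(|ω|·|F(ω)|) ≤ K + L |ω|` for some constants `K, L ≥ 0`; in particular any `κ` with
`|κ|² = |ω|·|F(ω)|` has `|Re κ|, |Im κ| ≤ K + L |ω|`. -/
theorem attenuation_affine_bound (a b : ℝ) (ha : 0 ≤ a) (hb : 0 ≤ b)
    (ν : Measure ℝ) (hν0 : ν (Set.Iic 0) = 0)
    (h1 : ∫⁻ r in Set.Ioc (0 : ℝ) 1, ENNReal.ofReal r ∂ν ≠ ⊤)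
    (h2 : ν (Set.Ioi (1 : ℝ)) ≠ ⊤)
    (F : ℝ → ℂ)
    (hF : ∀ ω : ℝ, F ω = (a : ℂ) - Complex.I * (b : ℂ) * (ω : ℂ) +
      ∫ r in Set.Ioi (0 : ℝ), (1 - Complex.exp (Complex.I * (r : ℂ) * (ω : ℂ))) ∂ν) :
    ∃ K L : ℝ, 0 ≤ K ∧ 0 ≤ L ∧ ∀ ω : ℝ,
      Real.sqrt (|ω| * ‖F ω‖) ≤ K + L * |ω| ∧
      ∀ κ : ℂ, ‖κ‖ ^ 2 = |ω| * ‖F ω‖ →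
        |κ.re| ≤ K + L * |ω| ∧ |κ.im| ≤ K + L * |ω| :=
  attenuation_affine_bound_general a b ν h1 h2 F hF
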